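/- (Theorem 3, critical point count) Let 0 < r_1 < r_2 < r_3. The perimeter L, viewed as a smooth function on the 2-torus (ℝ/2πℤ)² in the coordinates (α_1, α_2) with α_3 = 0, has exactly six critical points. -/

import Mathlib

open Real

/-- Length of the chordal segment between points at radii `r`, `r'` whose polar angles
differ by `θ`. -/
noncomputable def ell (r r' θ : ℝ) : ℝ :=
  Real.sqrt (r ^ 2 + r' ^ 2 - 2 * r * r' * Real.cos θ)

/-- The perimeter of the connecting cycle for three concentric circles of radii
`r1, r2, r3`, as a function of the polar angles `a1, a2` of the first two vertices,
the third angle being fixed to `0`. -/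
noncomputable def L3 (r1 r2 r3 : ℝ) (a1 a2 : ℝ) : ℝ :=
  ell r1 r2 (a2 - a1) + ell r2 r3 (0 - a2) + ell r3 r1 (a1 - 0)

/-- Partial derivative in the first variable. -/
noncomputable def pd1 (f : ℝ → ℝ → ℝ) (a b : ℝ) : ℝ := deriv (fun x => f x b) a

/-- Partial derivative in the second variable. -/
noncomputable def pd2 (f : ℝ → ℝ → ℝ) (a b : ℝ) : ℝ := deriv (fun y => f a y) b

/-- The Hessian matrix of `L3 r1 r2 r3` at `(a, b)` in the reduced coordinates
`(α₁, α₂)`. -/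
noncomputable def hess3 (r1 r2 r3 a b : ℝ) : Matrix (Fin 2) (Fin 2) ℝ :=
  !![pd1 (pd1 (L3 r1 r2 r3)) a b, pd1 (pd2 (L3 r1 r2 r3)) a b;
     pd2 (pd1 (L3 r1 r2 r3)) a b, pd2 (pd2 (L3 r1 r2 r3)) a b]

/-!
Differentiating `ell r r' θ = √(r² + r'² - 2 r r' cos θ)` in `θ` gives `r r' sin θ / ell r r' θ`,
which is the signed distance from `O` to the line through the two vertices (twice the area of
the triangle they span with `O`, divided by its base). So `(α₁, α₂)` is critical exactly when
`O` has the same signed distance `s` from the three side lines.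

If `s = 0` the vertices are collinear with `O`, and `α₁, α₂ ∈ {0, π}`: four critical points.
If `s ≠ 0`, `O` is the incenter of the triangle and `|s|` its inradius. The half-angle at the
vertex on the circle of radius `rᵢ` is `arcsin (|s| / rᵢ)` and the half-angles sum to `π / 2`,
which determines `|s|` by monotonicity; the two signs of `s` give a triangle and its mirror
image.
-/

open Set

namespace ThreeCircles

/-- The derivative of `ell r r'`: the signed distance from `O` to the line through the points
at radii `r`, `r'` whose polar angles differ by `θ`. -/
noncomputable def height (r r' θ : ℝ) : ℝ := r * r' * sin θ / ell r r' θ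

section Chord

variable {r r' θ : ℝ}

lemma sq_add_sq_sub_mul_cos_pos (hr : 0 < r) (hr' : 0 < r') (hrr' : r ≠ r') (θ : ℝ) :
    0 < r ^ 2 + r' ^ 2 - 2 * r * r' * cos θ := by
  have : 0 < (r - r') ^ 2 := sq_pos_of_ne_zero (sub_ne_zero.2 hrr')
  nlinarith [cos_le_one θ, mul_pos hr hr']

lemma ell_pos (hr : 0 < r) (hr' : 0 < r') (hrr' : r ≠ r') (θ : ℝ) : 0 < ell r r' θ :=
  sqrt_pos.2 (sq_add_sq_sub_mul_cos_pos hr hr' hrr' θ)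

lemma sq_ell (hr : 0 < r) (hr' : 0 < r') (hrr' : r ≠ r') (θ : ℝ) :
    ell r r' θ ^ 2 = r ^ 2 + r' ^ 2 - 2 * r * r' * cos θ :=
  sq_sqrt (sq_add_sq_sub_mul_cos_pos hr hr' hrr' θ).le

lemma ell_comm (r r' θ : ℝ) : ell r r' θ = ell r' r θ := by
  simp only [ell]; ring_nf

lemma ell_periodic (r r' : ℝ) : Function.Periodic (ell r r') (2 * π) := by
  intro θ; simp only [ell, cos_add_two_pi]

lemma height_neg (r r' θ : ℝ) : height r r' (-θ) = -height r r' θ := by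
  simp only [height, ell, sin_neg, cos_neg]; ring

@[simp]
lemma height_zero (r r' : ℝ) : height r r' 0 = 0 := by simp [height]

lemma height_comm (r r' θ : ℝ) : height r r' θ = height r' r θ := by
  rw [height, height, ell_comm]; ring

lemma height_periodic (r r' : ℝ) : Function.Periodic (height r r') (2 * π) := by
  intro θ; simp only [height, sin_add_two_pi, ell_periodic r r' θ]

lemma height_eq_mul_sin (r r' θ : ℝ) : height r r' θ = r * r' / ell r r' θ * sin θ := by
  rw [height]; ring

lemma height_pos_iff (hr : 0 < r) (hr' : 0 < r') (hrr' : r ≠ r') :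
    0 < height r r' θ ↔ 0 < sin θ := by
  rw [height_eq_mul_sin]
  exact mul_pos_iff_of_pos_left (by have := ell_pos hr hr' hrr' θ; positivity)

lemma height_eq_zero_iff (hr : 0 < r) (hr' : 0 < r') (hrr' : r ≠ r') :
    height r r' θ = 0 ↔ sin θ = 0 := by
  rw [height_eq_mul_sin]
  exact mul_eq_zero_iff_left (by have := ell_pos hr hr' hrr' θ; positivity)

lemma hasDerivAt_ell (hr : 0 < r) (hr' : 0 < r') (hrr' : r ≠ r') (θ : ℝ) :
    HasDerivAt (ell r r') (height r r' θ) θ := by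
  refine ((((hasDerivAt_cos θ).const_mul (2 * r * r')).const_sub (r ^ 2 + r' ^ 2)).sqrt
    (sq_add_sq_sub_mul_cos_pos hr hr' hrr' θ).ne').congr_deriv ?_
  rw [height, ell]
  field_simp

lemma height_le_left (hr : 0 < r) (hr' : 0 < r') (hrr' : r ≠ r') (θ : ℝ) :
    height r r' θ ≤ r := by
  have hell := ell_pos hr hr' hrr' θ
  have : r' * sin θ ≤ ell r r' θ :=
    (le_abs_self _).trans <| abs_le_sqrt <| by
      nlinarith [sq_nonneg (r - r' * cos θ), sin_sq_add_cos_sq θ]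
  rw [height, div_le_iff₀ hell]
  nlinarith

lemma abs_height_le_left (hr : 0 < r) (hr' : 0 < r') (hrr' : r ≠ r') (θ : ℝ) :
    |height r r' θ| ≤ r := by
  refine abs_le.2 ⟨?_, height_le_left hr hr' hrr' θ⟩
  linarith [height_neg r r' θ, height_le_left hr hr' hrr' (-θ)]

lemma abs_height_le_right (hr : 0 < r) (hr' : 0 < r') (hrr' : r ≠ r') (θ : ℝ) :
    |height r r' θ| ≤ r' :=
  height_comm r r' θ ▸ abs_height_le_left hr' hr hrr'.symm θ

end Chord

section Arcsin

variable {r s : ℝ}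

lemma mul_sin_arcsin_div (hr : 0 < r) (hs : |s| ≤ r) : r * sin (arcsin (s / r)) = s := by
  obtain ⟨h₁, h₂⟩ := abs_le.1 hs
  rw [sin_arcsin (by rw [le_div_iff₀ hr]; linarith) (by rw [div_le_one hr]; linarith)]
  field_simp

lemma mul_cos_arcsin_div (hr : 0 < r) (s : ℝ) :
    r * cos (arcsin (s / r)) = √(r ^ 2 - s ^ 2) := by
  rw [cos_arcsin, ← sqrt_sq hr.le, ← sqrt_mul (sq_nonneg r), sqrt_sq hr.le]
  congr 1
  field_simp

end Arcsin

section Branches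

variable {r r' s θ : ℝ}

/-- Squaring `r r' sin θ = s ell r r' θ` leaves a quadratic in `cos θ`, whose two roots are
`cos (φ - φ')` and `cos (π - φ - φ')` with `φ = arcsin (s / r)`, `φ' = arcsin (s / r')`. -/
lemma cos_eq_of_height_eq (hr : 0 < r) (hr' : 0 < r') (hrr' : r ≠ r') (h : height r r' θ = s) :
    cos θ = cos (arcsin (s / r) - arcsin (s / r')) ∨
      cos θ = cos (π - arcsin (s / r) - arcsin (s / r')) := by
  have hsr : |s| ≤ r := h ▸ abs_height_le_left hr hr' hrr' θ
  have hsr' : |s| ≤ r' := h ▸ abs_height_le_right hr hr' hrr' θ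
  set φ := arcsin (s / r)
  set φ' := arcsin (s / r')
  set A := √(r ^ 2 - s ^ 2)
  set A' := √(r' ^ 2 - s ^ 2)
  have hA : A ^ 2 = r ^ 2 - s ^ 2 := sq_sqrt (by nlinarith [sq_abs s, abs_nonneg s])
  have hA' : A' ^ 2 = r' ^ 2 - s ^ 2 := sq_sqrt (by nlinarith [sq_abs s, abs_nonneg s])
  have hsin := mul_sin_arcsin_div hr hsr
  have hsin' := mul_sin_arcsin_div hr' hsr'
  have hcos := mul_cos_arcsin_div hr s
  have hcos' := mul_cos_arcsin_div hr' s
  have hcross : r * r' * sin θ = s * ell r r' θ := by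
    rw [← h, height, div_mul_cancel₀ _ (ell_pos hr hr' hrr' θ).ne']
  have hquad : (r * r' * cos θ - s ^ 2) ^ 2 = (A * A') ^ 2 := by
    rw [mul_pow, hA, hA']
    linear_combination (-1 : ℝ) * congrArg (· ^ 2) hcross - s ^ 2 * sq_ell hr hr' hrr' θ
      + r ^ 2 * r' ^ 2 * sin_sq_add_cos_sq θ
  have hdiff : r * r' * cos (φ - φ') = s ^ 2 + A * A' := by
    rw [cos_sub]
    linear_combination (r' * cos φ') * hcos + A * hcos' + (r' * sin φ') * hsin + s * hsin'
  have hsum : r * r' * cos (π - φ - φ') = s ^ 2 - A * A' := by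
    rw [sub_sub, cos_pi_sub, cos_add]
    linear_combination -(r' * cos φ') * hcos - A * hcos' + (r' * sin φ') * hsin + s * hsin'
  have hrr : r * r' ≠ 0 := (mul_pos hr hr').ne'
  rcases sq_eq_sq_iff_eq_or_eq_neg.1 hquad with hc | hc
  · exact .inl <| mul_left_cancel₀ hrr (by linarith)
  · exact .inr <| mul_left_cancel₀ hrr (by linarith)

lemma eq_of_height_eq (hr : 0 < r) (hr' : 0 < r') (hrr' : r ≠ r') (hθ : θ ∈ Icc 0 π)
    (h : height r r' θ = s) :
    θ = π - arcsin (s / r) - arcsin (s / r') ∨ θ = |arcsin (s / r) - arcsin (s / r')| := by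
  have hs : 0 ≤ s := by
    rw [← h, height_eq_mul_sin]
    have := ell_pos hr hr' hrr' θ
    have := sin_nonneg_of_mem_Icc hθ
    positivity
  have hφ := arcsin_nonneg.2 (div_nonneg hs hr.le)
  have hφ' := arcsin_nonneg.2 (div_nonneg hs hr'.le)
  have hφπ := arcsin_le_pi_div_two (s / r)
  have hφπ' := arcsin_le_pi_div_two (s / r')
  rcases cos_eq_of_height_eq hr hr' hrr' h with hc | hc
  · rw [← cos_abs (arcsin (s / r) - _)] at hc
    exact .inr <| injOn_cos hθ ⟨abs_nonneg _, abs_sub_le_iff.2 ⟨by linarith, by linarith⟩⟩ hc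
  · exact .inl <| injOn_cos hθ ⟨by linarith, by linarith⟩ hc

lemma height_pi_sub_arcsin_sub_arcsin (hr : 0 < r) (hr' : 0 < r') (hrr' : r ≠ r')
    (hsr : |s| ≤ r) (hsr' : |s| ≤ r') :
    height r r' (π - arcsin (s / r) - arcsin (s / r')) = s := by
  set φ := arcsin (s / r)
  set φ' := arcsin (s / r')
  set A := √(r ^ 2 - s ^ 2)
  set A' := √(r' ^ 2 - s ^ 2)
  have hA : A ^ 2 = r ^ 2 - s ^ 2 := sq_sqrt (by nlinarith [sq_abs s, abs_nonneg s])
  have hA' : A' ^ 2 = r' ^ 2 - s ^ 2 := sq_sqrt (by nlinarith [sq_abs s, abs_nonneg s])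
  have hsin := mul_sin_arcsin_div hr hsr
  have hsin' := mul_sin_arcsin_div hr' hsr'
  have hcos := mul_cos_arcsin_div hr s
  have hcos' := mul_cos_arcsin_div hr' s
  have hsinθ : r * r' * sin (π - φ - φ') = s * (A + A') := by
    rw [sub_sub, sin_pi_sub, sin_add]
    linear_combination (r' * cos φ') * hsin + s * hcos' + (r' * sin φ') * hcos + A * hsin'
  have hcosθ : r * r' * cos (π - φ - φ') = s ^ 2 - A * A' := by
    rw [sub_sub, cos_pi_sub, cos_add]
    linear_combination -(r' * cos φ') * hcos - A * hcos' + (r' * sin φ') * hsin + s * hsin'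
  have hell : ell r r' (π - φ - φ') = A + A' := by
    rw [ell, show r ^ 2 + r' ^ 2 - 2 * r * r' * cos (π - φ - φ') = (A + A') ^ 2 by
      linear_combination (-2 : ℝ) * hcosθ - hA - hA']
    exact sqrt_sq (by positivity)
  have hAA : A + A' ≠ 0 := hell ▸ (ell_pos hr hr' hrr' _).ne'
  rw [height, hsinθ, hell, mul_div_cancel_right₀ _ hAA]

lemma eq_pi_sub_of_add_add_eq_two_pi {φ₁ φ₂ φ₃ u v w : ℝ} (h₁ : φ₁ ∈ Ioc 0 (π / 2))
    (h₂ : φ₂ ∈ Ioc 0 (π / 2)) (h₃ : φ₃ ∈ Ioc 0 (π / 2))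
    (hu : u = π - φ₃ - φ₁ ∨ u = |φ₃ - φ₁|) (hv : v = π - φ₂ - φ₃ ∨ v = |φ₂ - φ₃|)
    (hw : w = π - φ₁ - φ₂ ∨ w = |φ₁ - φ₂|) (hsum : u + v + w = 2 * π) :
    φ₁ + φ₂ + φ₃ = π / 2 ∧ u = π - φ₃ - φ₁ ∧ v = π - φ₂ - φ₃ := by
  have bound : ∀ {x y : ℝ}, x ∈ Ioc 0 (π / 2) → y ∈ Ioc 0 (π / 2) →
      |x - y| < x + y ∧ |x - y| < π / 2 := fun ⟨hx, hx'⟩ ⟨hy, hy'⟩ ↦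
    ⟨abs_sub_lt_iff.2 ⟨by linarith, by linarith⟩, abs_sub_lt_iff.2 ⟨by linarith, by linarith⟩⟩
  obtain ⟨b₃₁, b₃₁'⟩ := bound h₃ h₁
  obtain ⟨b₂₃, b₂₃'⟩ := bound h₂ h₃
  obtain ⟨b₁₂, b₁₂'⟩ := bound h₁ h₂
  rcases hu with hu | hu <;> rcases hv with hv | hv <;> rcases hw with hw | hw <;>
    refine ⟨?_, ?_, ?_⟩ <;> linarith [h₁.1, h₂.1, h₃.1, pi_pos]

end Branches

section Trig

variable {x : ℝ}

lemma mem_Ioo_of_sin_pos (hx₀ : 0 ≤ x) (hx : x ≤ 2 * π) (h : 0 < sin x) : x ∈ Ioo 0 π := by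
  refine ⟨hx₀.lt_of_ne ?_, lt_of_not_ge fun hπ ↦ ?_⟩
  · rintro rfl
    simp at h
  · have := sin_nonneg_of_nonneg_of_le_pi (x := x - π) (by linarith) (by linarith)
    rw [sin_sub_pi] at this
    linarith

lemma eq_zero_or_eq_pi_of_sin_eq_zero (hx₀ : 0 ≤ x) (hx : x < 2 * π) (h : sin x = 0) :
    x = 0 ∨ x = π := by
  rcases hx₀.eq_or_lt with rfl | hx₀
  · exact .inl rfl
  · right
    rw [← sub_eq_zero, ← sin_eq_zero_iff_of_lt_of_lt (by linarith) (by linarith), sin_sub_pi, h,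
      neg_zero]

end Trig

noncomputable def arcsinSum (r₁ r₂ r₃ s : ℝ) : ℝ :=
  arcsin (s / r₁) + arcsin (s / r₂) + arcsin (s / r₃)

section ArcsinSum

variable {r₁ r₂ r₃ : ℝ}

lemma injOn_arcsinSum (h₁ : 0 < r₁) (h₂ : 0 ≤ r₂) (h₃ : 0 ≤ r₃) :
    InjOn (arcsinSum r₁ r₂ r₃) (Icc (-r₁) r₁) := by
  refine StrictMonoOn.injOn fun x hx y hy hxy ↦ ?_
  have mem : ∀ {z}, z ∈ Icc (-r₁) r₁ → z / r₁ ∈ Icc (-1) 1 := fun ⟨hz, hz'⟩ ↦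
    ⟨by rwa [le_div_iff₀ h₁, neg_one_mul], by rwa [div_le_one h₁]⟩
  have k₁ := strictMonoOn_arcsin (mem hx) (mem hy) (div_lt_div_of_pos_right hxy h₁)
  have k₂ := monotone_arcsin (div_le_div_of_nonneg_right hxy.le h₂)
  have k₃ := monotone_arcsin (div_le_div_of_nonneg_right hxy.le h₃)
  simp only [arcsinSum]
  linarith

lemma exists_arcsinSum_eq_pi_div_two (h₁ : 0 < r₁) (h₂ : 0 < r₂) (h₃ : 0 < r₃) :
    ∃ s ∈ Ioo 0 r₁, arcsinSum r₁ r₂ r₃ s = π / 2 := by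
  have hcont : ContinuousOn (arcsinSum r₁ r₂ r₃) (Icc 0 r₁) := by
    unfold arcsinSum
    fun_prop
  refine intermediate_value_Ioo h₁.le hcont ⟨by simp [arcsinSum, pi_pos], ?_⟩
  have := arcsin_pos.2 (div_pos h₁ h₂)
  have := arcsin_pos.2 (div_pos h₁ h₃)
  simp only [arcsinSum, div_self h₁.ne', arcsin_one]
  linarith

end ArcsinSum

section Perimeter

variable {r₁ r₂ r₃ s a b : ℝ}

lemma hasDerivAt_L3_fst (h₁ : 0 < r₁) (h₂ : 0 < r₂) (h₃ : 0 < r₃) (h₁₂ : r₁ ≠ r₂)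
    (h₃₁ : r₃ ≠ r₁) (a b : ℝ) :
    HasDerivAt (fun t ↦ L3 r₁ r₂ r₃ t b) (height r₃ r₁ a - height r₁ r₂ (b - a)) a := by
  have e₁₂ := (hasDerivAt_ell h₁ h₂ h₁₂ (b - a)).comp a ((hasDerivAt_id a).const_sub b)
  have e₃₁ := (hasDerivAt_ell h₃ h₁ h₃₁ (a - 0)).comp a ((hasDerivAt_id a).sub_const 0)
  refine ((e₁₂.add_const (ell r₂ r₃ (0 - b))).add e₃₁).congr_deriv ?_
  rw [sub_zero]
  ring

lemma hasDerivAt_L3_snd (h₁ : 0 < r₁) (h₂ : 0 < r₂) (h₃ : 0 < r₃) (h₁₂ : r₁ ≠ r₂)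
    (h₂₃ : r₂ ≠ r₃) (a b : ℝ) :
    HasDerivAt (fun t ↦ L3 r₁ r₂ r₃ a t) (height r₁ r₂ (b - a) - height r₂ r₃ (-b)) b := by
  have e₁₂ := (hasDerivAt_ell h₁ h₂ h₁₂ (b - a)).comp b ((hasDerivAt_id b).sub_const a)
  have e₂₃ := (hasDerivAt_ell h₂ h₃ h₂₃ (0 - b)).comp b ((hasDerivAt_id b).const_sub 0)
  refine ((e₁₂.add e₂₃).add_const (ell r₃ r₁ (a - 0))).congr_deriv ?_
  rw [zero_sub]
  ring

/-- `O` is at the same signed distance from the three side lines of the triangle with vertex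
angles `a`, `b`, `0`. -/
def EqualHeights (r₁ r₂ r₃ a b : ℝ) : Prop :=
  height r₃ r₁ a = height r₁ r₂ (b - a) ∧ height r₁ r₂ (b - a) = height r₂ r₃ (-b)

lemma deriv_L3_eq_zero_iff (h₁ : 0 < r₁) (h₂ : 0 < r₂) (h₃ : 0 < r₃) (h₁₂ : r₁ ≠ r₂)
    (h₂₃ : r₂ ≠ r₃) (h₃₁ : r₃ ≠ r₁) (a b : ℝ) :
    deriv (fun t ↦ L3 r₁ r₂ r₃ t b) a = 0 ∧ deriv (fun t ↦ L3 r₁ r₂ r₃ a t) b = 0 ↔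
      EqualHeights r₁ r₂ r₃ a b := by
  rw [(hasDerivAt_L3_fst h₁ h₂ h₃ h₁₂ h₃₁ a b).deriv,
    (hasDerivAt_L3_snd h₁ h₂ h₃ h₁₂ h₂₃ a b).deriv, sub_eq_zero, sub_eq_zero, EqualHeights]

lemma EqualHeights.two_pi_sub (h : EqualHeights r₁ r₂ r₃ a b) :
    EqualHeights r₁ r₂ r₃ (2 * π - a) (2 * π - b) := by
  obtain ⟨h₃₁, h₂₃⟩ := h
  have e : 2 * π - b - (2 * π - a) = -(b - a) := by ring
  refine ⟨?_, ?_⟩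
  · rw [(height_periodic _ _).sub_eq', e, height_neg, height_neg, h₃₁]
  · rw [e, height_neg, show -(2 * π - b) = b - 2 * π by ring, (height_periodic _ _).sub_eq, h₂₃,
      height_neg, neg_neg]

lemma equalHeights_of_sin_eq_zero (ha : sin a = 0) (hb : sin b = 0) :
    EqualHeights r₁ r₂ r₃ a b := by
  have hba : sin (b - a) = 0 := by rw [sin_sub, ha, hb]; ring
  simp [EqualHeights, height, ha, hba, hb]

lemma EqualHeights.mem_prod_of_height_eq_zero (h : EqualHeights r₁ r₂ r₃ a b) (h₁ : 0 < r₁)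
    (h₂ : 0 < r₂) (h₃ : 0 < r₃) (h₂₃ : r₂ ≠ r₃) (h₃₁ : r₃ ≠ r₁) (ha : a ∈ Ico 0 (2 * π))
    (hb : b ∈ Ico 0 (2 * π)) (h₀ : height r₃ r₁ a = 0) :
    (a, b) ∈ ({0, π} ×ˢ {0, π} : Set (ℝ × ℝ)) := by
  have sa : sin a = 0 := (height_eq_zero_iff h₃ h₁ h₃₁).1 h₀
  have sb : sin (-b) = 0 := (height_eq_zero_iff h₂ h₃ h₂₃).1 (h.2 ▸ h.1 ▸ h₀)
  rw [sin_neg, neg_eq_zero] at sb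
  exact ⟨eq_zero_or_eq_pi_of_sin_eq_zero ha.1 ha.2 sa, eq_zero_or_eq_pi_of_sin_eq_zero hb.1 hb.2 sb⟩

/-- The vertex angles `(α₁, α₂)` of the counterclockwise triangle with incenter `O` and inradius
`s` (its side `ij` subtends the central angle `π - arcsin (s / rᵢ) - arcsin (s / rⱼ)`); for `s < 0`
its mirror image. -/
noncomputable def incenterAngles (r₁ r₂ r₃ s : ℝ) : ℝ × ℝ :=
  (π - arcsin (s / r₃) - arcsin (s / r₁), π + arcsin (s / r₂) + arcsin (s / r₃))

lemma incenterAngles_neg (r₁ r₂ r₃ s : ℝ) :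
    incenterAngles r₁ r₂ r₃ (-s) =
      (2 * π - (incenterAngles r₁ r₂ r₃ s).1, 2 * π - (incenterAngles r₁ r₂ r₃ s).2) := by
  simp only [incenterAngles, neg_div, arcsin_neg, Prod.mk.injEq]
  constructor <;> ring

lemma incenterAngles_mem (h₁ : 0 < r₁) (h₂ : 0 < r₂) (h₃ : 0 < r₃) (hs : 0 < s)
    (hsum : arcsinSum r₁ r₂ r₃ s = π / 2) :
    (incenterAngles r₁ r₂ r₃ s).1 ∈ Ioo 0 π ∧ (incenterAngles r₁ r₂ r₃ s).2 ∈ Ioo π (2 * π) := by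
  have := arcsin_pos.2 (div_pos hs h₁)
  have := arcsin_pos.2 (div_pos hs h₂)
  have := arcsin_pos.2 (div_pos hs h₃)
  simp only [arcsinSum] at hsum
  simp only [incenterAngles]
  exact ⟨⟨by linarith, by linarith⟩, ⟨by linarith, by linarith⟩⟩

lemma equalHeights_incenterAngles (h₁ : 0 < r₁) (h₂ : 0 < r₂) (h₃ : 0 < r₃) (h₁₂ : r₁ ≠ r₂)
    (h₂₃ : r₂ ≠ r₃) (h₃₁ : r₃ ≠ r₁) (hs₁ : |s| ≤ r₁) (hs₂ : |s| ≤ r₂) (hs₃ : |s| ≤ r₃)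
    (hsum : arcsinSum r₁ r₂ r₃ s = π / 2) :
    EqualHeights r₁ r₂ r₃ (incenterAngles r₁ r₂ r₃ s).1 (incenterAngles r₁ r₂ r₃ s).2 := by
  simp only [arcsinSum] at hsum
  simp only [EqualHeights, incenterAngles]
  rw [show π + arcsin (s / r₂) + arcsin (s / r₃) - (π - arcsin (s / r₃) - arcsin (s / r₁)) =
      π - arcsin (s / r₁) - arcsin (s / r₂) by linarith,
    show -(π + arcsin (s / r₂) + arcsin (s / r₃)) =
      π - arcsin (s / r₂) - arcsin (s / r₃) - 2 * π by ring,
    (height_periodic _ _).sub_eq, height_pi_sub_arcsin_sub_arcsin h₃ h₁ h₃₁ hs₃ hs₁,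
    height_pi_sub_arcsin_sub_arcsin h₁ h₂ h₁₂ hs₁ hs₂,
    height_pi_sub_arcsin_sub_arcsin h₂ h₃ h₂₃ hs₂ hs₃]
  exact ⟨rfl, rfl⟩

lemma EqualHeights.eq_incenterAngles (h : EqualHeights r₁ r₂ r₃ a b) (h₁ : 0 < r₁)
    (h₂ : 0 < r₂) (h₃ : 0 < r₃) (h₁₂ : r₁ ≠ r₂) (h₂₃ : r₂ ≠ r₃) (h₃₁ : r₃ ≠ r₁)
    (ha : a ∈ Ico 0 (2 * π)) (hb : b ∈ Ico 0 (2 * π)) (hpos : 0 < height r₃ r₁ a)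
    (hs : s ∈ Icc (-r₁) r₁) (hsum : arcsinSum r₁ r₂ r₃ s = π / 2) :
    (a, b) = incenterAngles r₁ r₂ r₃ s := by
  obtain ⟨hw, hv⟩ := h
  set t := height r₃ r₁ a
  have hv' : height r₂ r₃ (2 * π - b) = t := by rw [(height_periodic _ _).sub_eq', ← hv, ← hw]
  have hu := mem_Ioo_of_sin_pos ha.1 ha.2.le ((height_pos_iff h₃ h₁ h₃₁).1 hpos)
  have hvI := mem_Ioo_of_sin_pos (by linarith [hb.2]) (by linarith [hb.1])
    ((height_pos_iff h₂ h₃ h₂₃).1 (hv' ▸ hpos))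
  have hwI := mem_Ioo_of_sin_pos (by linarith [hu.2, hvI.2]) (by linarith [hu.1, hb.2])
    ((height_pos_iff h₁ h₂ h₁₂).1 (hw ▸ hpos))
  have hφ : ∀ {r : ℝ}, 0 < r → arcsin (t / r) ∈ Ioc 0 (π / 2) := fun hr ↦
    ⟨arcsin_pos.2 (div_pos hpos hr), arcsin_le_pi_div_two _⟩
  obtain ⟨hsum', hau, hbv⟩ := eq_pi_sub_of_add_add_eq_two_pi (hφ h₁) (hφ h₂) (hφ h₃)
    (eq_of_height_eq h₃ h₁ h₃₁ (Ioo_subset_Icc_self hu) rfl)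
    (eq_of_height_eq h₂ h₃ h₂₃ (Ioo_subset_Icc_self hvI) hv')
    (eq_of_height_eq h₁ h₂ h₁₂ (Ioo_subset_Icc_self hwI) hw.symm) (by ring)
  have ht : t = s := injOn_arcsinSum h₁ h₂.le h₃.le
    (abs_le.1 (abs_height_le_right h₃ h₁ h₃₁ a)) hs (hsum'.trans hsum.symm)
  rw [ht] at hau hbv
  ext <;> simp only [incenterAngles] <;> linarith

lemma EqualHeights.eq_incenterAngles_neg (h : EqualHeights r₁ r₂ r₃ a b) (h₁ : 0 < r₁)
    (h₂ : 0 < r₂) (h₃ : 0 < r₃) (h₁₂ : r₁ ≠ r₂) (h₂₃ : r₂ ≠ r₃) (h₃₁ : r₃ ≠ r₁)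
    (ha : a ∈ Ico 0 (2 * π)) (hb : b ∈ Ico 0 (2 * π)) (hneg : height r₃ r₁ a < 0)
    (hs : s ∈ Icc (-r₁) r₁) (hsum : arcsinSum r₁ r₂ r₃ s = π / 2) :
    (a, b) = incenterAngles r₁ r₂ r₃ (-s) := by
  have ha₀ : a ≠ 0 := by rintro rfl; simp at hneg
  have hb₀ : b ≠ 0 := by
    rintro rfl
    have := h.1.trans h.2
    rw [neg_zero, height_zero] at this
    exact hneg.ne this
  have hmirror := h.two_pi_sub.eq_incenterAngles h₁ h₂ h₃ h₁₂ h₂₃ h₃₁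
    ⟨by linarith [ha.2], by linarith [ha.1.lt_of_ne' ha₀]⟩
    ⟨by linarith [hb.2], by linarith [hb.1.lt_of_ne' hb₀]⟩
    (by rw [(height_periodic _ _).sub_eq', height_neg]; linarith) hs hsum
  rw [incenterAngles_neg, ← hmirror, sub_sub_cancel, sub_sub_cancel]

def criticalSet (r₁ r₂ r₃ s : ℝ) : Set (ℝ × ℝ) :=
  {0, π} ×ˢ {0, π} ∪ {incenterAngles r₁ r₂ r₃ s, incenterAngles r₁ r₂ r₃ (-s)}

lemma mem_criticalSet_iff (h₁ : 0 < r₁) (h₂ : 0 < r₂) (h₃ : 0 < r₃) (h₁₂ : r₁ ≠ r₂)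
    (h₂₃ : r₂ ≠ r₃) (h₃₁ : r₃ ≠ r₁) (hs : 0 < s) (hs₁ : s ≤ r₁) (hs₂ : s ≤ r₂) (hs₃ : s ≤ r₃)
    (hsum : arcsinSum r₁ r₂ r₃ s = π / 2) :
    (a, b) ∈ criticalSet r₁ r₂ r₃ s ↔
      a ∈ Ico 0 (2 * π) ∧ b ∈ Ico 0 (2 * π) ∧ EqualHeights r₁ r₂ r₃ a b := by
  obtain ⟨⟨hP₁, hP₁'⟩, hP₂, hP₂'⟩ := incenterAngles_mem h₁ h₂ h₃ hs hsum
  have hP := equalHeights_incenterAngles h₁ h₂ h₃ h₁₂ h₂₃ h₃₁ (by rwa [abs_of_pos hs])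
    (by rwa [abs_of_pos hs]) (by rwa [abs_of_pos hs]) hsum
  have hs' : s ∈ Icc (-r₁) r₁ := ⟨by linarith, hs₁⟩
  constructor
  · have hcol : ∀ {x : ℝ}, x ∈ ({0, π} : Set ℝ) → x ∈ Ico 0 (2 * π) ∧ sin x = 0 := by
      rintro x (rfl | rfl)
      · exact ⟨⟨le_rfl, by positivity⟩, sin_zero⟩
      · exact ⟨⟨pi_pos.le, by linarith [pi_pos]⟩, sin_pi⟩
    rintro ((⟨ha, hb⟩ | h | h) : _ ∨ _ ∨ _)
    · exact ⟨(hcol ha).1, (hcol hb).1, equalHeights_of_sin_eq_zero (hcol ha).2 (hcol hb).2⟩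
    · obtain ⟨rfl, rfl⟩ := Prod.ext_iff.1 h
      exact ⟨⟨hP₁.le, by linarith⟩, ⟨by linarith, hP₂'⟩, hP⟩
    · obtain ⟨rfl, rfl⟩ := Prod.ext_iff.1 (incenterAngles_neg r₁ r₂ r₃ s ▸ h)
      exact ⟨⟨by linarith, by linarith⟩, ⟨by linarith, by linarith⟩, hP.two_pi_sub⟩
  · rintro ⟨ha, hb, h⟩
    rcases lt_trichotomy (height r₃ r₁ a) 0 with hneg | h₀ | hpos
    · exact .inr (.inr (h.eq_incenterAngles_neg h₁ h₂ h₃ h₁₂ h₂₃ h₃₁ ha hb hneg hs' hsum))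
    · exact .inl (h.mem_prod_of_height_eq_zero h₁ h₂ h₃ h₂₃ h₃₁ ha hb h₀)
    · exact .inr (.inl (h.eq_incenterAngles h₁ h₂ h₃ h₁₂ h₂₃ h₃₁ ha hb hpos hs' hsum))

lemma ncard_criticalSet (h₁ : 0 < r₁) (h₂ : 0 < r₂) (h₃ : 0 < r₃) (hs : 0 < s)
    (hsum : arcsinSum r₁ r₂ r₃ s = π / 2) : (criticalSet r₁ r₂ r₃ s).ncard = 6 := by
  obtain ⟨⟨hP₁, hP₁'⟩, -⟩ := incenterAngles_mem h₁ h₂ h₃ hs hsum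
  have hfst : (incenterAngles r₁ r₂ r₃ (-s)).1 = 2 * π - (incenterAngles r₁ r₂ r₃ s).1 := by
    rw [incenterAngles_neg]
  have hne : incenterAngles r₁ r₂ r₃ s ≠ incenterAngles r₁ r₂ r₃ (-s) := fun h ↦ by
    linarith [congrArg Prod.fst h]
  have hdisj : Disjoint ({0, π} ×ˢ {0, π} : Set (ℝ × ℝ))
      {incenterAngles r₁ r₂ r₃ s, incenterAngles r₁ r₂ r₃ (-s)} := by
    rw [disjoint_right]
    rintro q (rfl | rfl) ⟨hq | (hq : _ = π), -⟩ <;> linarith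
  rw [criticalSet, ncard_union_eq hdisj, ncard_prod, ncard_pair pi_ne_zero.symm, ncard_pair hne]

end Perimeter

end ThreeCircles

/-- Theorem 3, critical point count: for `0 < r1 < r2 < r3` the perimeter,
viewed as a `2π`-periodic function of `(α₁, α₂)` (i.e. as a function on the torus
`(ℝ/2πℤ)²`, represented by the fundamental domain `[0, 2π) × [0, 2π)`), has exactly six
critical points. -/
theorem stmt_8 (r1 r2 r3 : ℝ) (h1 : 0 < r1) (h12 : r1 < r2) (h23 : r2 < r3) :
    Set.ncard {q : ℝ × ℝ | q.1 ∈ Set.Ico 0 (2 * π) ∧ q.2 ∈ Set.Ico 0 (2 * π) ∧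
      deriv (fun t => L3 r1 r2 r3 t q.2) q.1 = 0 ∧
      deriv (fun t => L3 r1 r2 r3 q.1 t) q.2 = 0} = 6 := by
  have h2 : 0 < r2 := h1.trans h12
  have h3 : 0 < r3 := h2.trans h23
  have h31 : r3 ≠ r1 := (h12.trans h23).ne'
  obtain ⟨s, ⟨hs, hs₁⟩, hsum⟩ := ThreeCircles.exists_arcsinSum_eq_pi_div_two h1 h2 h3
  convert ThreeCircles.ncard_criticalSet h1 h2 h3 hs hsum
  ext ⟨a, b⟩
  rw [ThreeCircles.mem_criticalSet_iff h1 h2 h3 h12.ne h23.ne h31 hs hs₁.le (by linarith)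
      (by linarith) hsum, ← ThreeCircles.deriv_L3_eq_zero_iff h1 h2 h3 h12.ne h23.ne h31]
  rfl
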